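/- (Formal removability under vanishing first horizontal gauge cohomology.) Let R be a commutative ring, D_x, D_y : R → R two commuting derivations extended coefficientwise to R[[λ]] and entrywise to matrices, and let (A₀,B₀) be a zero-curvature representation of n×n matrices over R such that every cocycle with respect to (A₀,B₀) is a coboundary (i.e. the first horizontal gauge cohomology H¹ vanishes). Then for every n×n matrix zero-curvature representation (A(λ), B(λ)) over R[[λ]] whose constant terms are A₀ and B₀, there exists an invertible n×n matrix S(λ) over R[[λ]] with constant term the identity matrix such that the gauge transform of (A(λ), B(λ)) by S(λ) equals the constant series (A₀, B₀). In other words, the formal parameter λ is formally removable. -/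

import Mathlib

/-!
The gauge matrix `S = 1 + S₁λ + S₂λ² + ⋯` is built order by order. Write `E_x(P) = D_x P - A₀P + PA`
and `E_y(P) = D_y P - B₀P + PB`; `P` gauges `(A, B)` to `(A₀, B₀)` exactly when both vanish. Because
`(A, B)` and `(A₀, B₀)` both have zero curvature and `D_x`, `D_y` commute,
`ĎD_y E_x(P) - ĎD_x E_y(P) = E_y(P) (A - A₀) - E_x(P) (B - B₀)`.
If `E_x(P)` and `E_y(P)` vanish below order `m`, the right side vanishes at order `m`, so the
order-`m` coefficients of `(E_x(P), E_y(P))` form a cocycle. By `H¹ = 0` it is the coboundary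
of some `Sₘ`, and `P - Sₘλ^m` then solves the equations below order `m + 1` without changing
lower coefficients. The limit has constant term `1`, so it is invertible.
-/

/-- A derivation of a commutative ring: an additive map satisfying the Leibniz rule. -/
def IsDeriv {R : Type*} [CommRing R] (D : R → R) : Prop :=
  (∀ a b, D (a + b) = D a + D b) ∧ (∀ a b, D (a * b) = D a * b + a * D b)

/-- The coefficientwise extension of a map `D : R → R` to formal power series `R[[λ]]`. -/
noncomputable def seriesD {R : Type*} [CommRing R] (D : R → R) :
    PowerSeries R → PowerSeries R :=
  fun φ => PowerSeries.mk fun k => D (PowerSeries.coeff (R := R) k φ)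

/-- The `k`-th coefficient matrix of a matrix of formal power series. -/
noncomputable def mcoeff {R : Type*} [CommRing R] {n : ℕ} (k : ℕ)
    (M : Matrix (Fin n) (Fin n) (PowerSeries R)) : Matrix (Fin n) (Fin n) R :=
  M.map (PowerSeries.coeff (R := R) k)


open PowerSeries Finset

section Derivation

variable {R : Type*} [CommRing R] {D : R → R}

namespace IsDeriv

def toAddMonoidHom (hD : IsDeriv D) : R →+ R := AddMonoidHom.mk' D hD.1

lemma map_zero (hD : IsDeriv D) : D 0 = 0 := hD.toAddMonoidHom.map_zero

lemma map_sub (hD : IsDeriv D) (a b : R) : D (a - b) = D a - D b :=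
  hD.toAddMonoidHom.map_sub a b

lemma map_one (hD : IsDeriv D) : D 1 = 0 := by
  simpa using hD.2 1 1

lemma map_sum (hD : IsDeriv D) {ι : Type*} (s : Finset ι) (f : ι → R) :
    D (∑ i ∈ s, f i) = ∑ i ∈ s, D (f i) :=
  _root_.map_sum hD.toAddMonoidHom f s

variable {ι κ μ : Type*}

lemma matrix_map_sub (hD : IsDeriv D) (M N : Matrix ι κ R) :
    (M - N).map D = M.map D - N.map D :=
  Matrix.map_sub D hD.map_sub M N

lemma matrix_map_mul [Fintype κ] (hD : IsDeriv D) (M : Matrix ι κ R) (N : Matrix κ μ R) :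
    (M * N).map D = M.map D * N + M * N.map D := by
  ext i j
  simp only [Matrix.map_apply, Matrix.mul_apply, Matrix.add_apply]
  rw [hD.map_sum, ← Finset.sum_add_distrib]
  exact Finset.sum_congr rfl fun k _ => hD.2 _ _

lemma matrix_map_one [DecidableEq ι] (hD : IsDeriv D) : (1 : Matrix ι ι R).map D = 0 := by
  ext i j
  by_cases h : i = j <;> simp [h, hD.map_one, hD.map_zero]

end IsDeriv

lemma isDeriv_seriesD (hD : IsDeriv D) : IsDeriv (seriesD D) := by
  refine ⟨fun φ ψ => ?_, fun φ ψ => ?_⟩ <;> ext k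
  · simp [seriesD, hD.1]
  · simp only [seriesD, coeff_mk, coeff_mul, map_add, hD.map_sum, ← Finset.sum_add_distrib]
    exact Finset.sum_congr rfl fun x _ => hD.2 _ _

lemma seriesD_seriesD_comm {Dx Dy : R → R} (hcomm : ∀ a, Dx (Dy a) = Dy (Dx a))
    (φ : R⟦X⟧) : seriesD Dx (seriesD Dy φ) = seriesD Dy (seriesD Dx φ) := by
  ext k
  simp [seriesD, hcomm]

lemma seriesD_C (hD : IsDeriv D) (a : R) : seriesD D (C a) = C (D a) := by
  ext k
  by_cases hk : k = 0 <;> simp [seriesD, coeff_C, hk, hD.map_zero]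

end Derivation

section TwistedDeriv

variable {R : Type*} [CommRing R] {ι : Type*} [Fintype ι]

/-- `twistedDeriv D α A P = 0` says that `P` gauges `A` to `α`, i.e. `(D P) P⁻¹ + P A P⁻¹ = α`;
for `A = α` it is the twisted derivation `ĎD` of the cocycle condition. -/
def twistedDeriv (D : R → R) (α A P : Matrix ι ι R) : Matrix ι ι R :=
  P.map D - (α * P - P * A)

def IsZeroCurvature (Dx Dy : R → R) (A B : Matrix ι ι R) : Prop :=
  A.map Dy - B.map Dx + (A * B - B * A) = 0

variable {D : R → R}

lemma twistedDeriv_sub (hD : IsDeriv D) (α A P Q : Matrix ι ι R) :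
    twistedDeriv D α A (P - Q) = twistedDeriv D α A P - twistedDeriv D α A Q := by
  simp only [twistedDeriv, hD.matrix_map_sub]
  noncomm_ring

lemma twistedDeriv_zero (hD : IsDeriv D) (α A : Matrix ι ι R) : twistedDeriv D α A 0 = 0 := by
  simp [twistedDeriv, Matrix.map_zero D hD.map_zero]

lemma twistedDeriv_one [DecidableEq ι] (hD : IsDeriv D) (α A : Matrix ι ι R) :
    twistedDeriv D α A 1 = A - α := by
  simp [twistedDeriv, hD.matrix_map_one]

lemma twistedDeriv_eq_add_mul (α A A₀ P : Matrix ι ι R) :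
    twistedDeriv D α A P = twistedDeriv D α A₀ P + P * (A - A₀) := by
  simp only [twistedDeriv]
  noncomm_ring

theorem twistedDeriv_twistedDeriv_sub {Dx Dy : R → R} (hDx : IsDeriv Dx) (hDy : IsDeriv Dy)
    (hcomm : ∀ a, Dx (Dy a) = Dy (Dx a)) {α β A B : Matrix ι ι R}
    (hαβ : IsZeroCurvature Dx Dy α β) (hAB : IsZeroCurvature Dx Dy A B) (P : Matrix ι ι R) :
    twistedDeriv Dy β β (twistedDeriv Dx α A P) - twistedDeriv Dx α α (twistedDeriv Dy β B P)
      = twistedDeriv Dy β B P * (A - α) - twistedDeriv Dx α A P * (B - β) := by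
  have hα : α.map Dy = β.map Dx - (α * β - β * α) := by
    rw [IsZeroCurvature] at hαβ; rw [← sub_eq_zero, ← hαβ]; noncomm_ring
  have hA : A.map Dy = B.map Dx - (A * B - B * A) := by
    rw [IsZeroCurvature] at hAB; rw [← sub_eq_zero, ← hAB]; noncomm_ring
  have hP : (P.map Dx).map Dy = (P.map Dy).map Dx := by
    ext i j; exact (hcomm (P i j)).symm
  simp only [twistedDeriv, hDx.matrix_map_sub, hDy.matrix_map_sub, hDx.matrix_map_mul,
    hDy.matrix_map_mul, hα, hA, hP]
  noncomm_ring

lemma map_add_mul_eq_of_twistedDeriv_eq_zero [DecidableEq ι] {α A S T : Matrix ι ι R}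
    (h : twistedDeriv D α A S = 0) (hST : S * T = 1) : S.map D * T + S * A * T = α := by
  rw [twistedDeriv, sub_eq_zero] at h
  rw [h, sub_mul, sub_add_cancel, mul_assoc, hST, mul_one]

end TwistedDeriv

section Coefficients

variable {R : Type*} [CommRing R] {n : ℕ}

lemma ext_mcoeff {M N : Matrix (Fin n) (Fin n) R⟦X⟧} (h : ∀ k, mcoeff k M = mcoeff k N) :
    M = N := by
  ext i j k
  exact congrFun (congrFun (h k) i) j

lemma mcoeff_zero (k : ℕ) : mcoeff k (0 : Matrix (Fin n) (Fin n) R⟦X⟧) = 0 := by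
  ext i j; simp [mcoeff]

lemma mcoeff_add (k : ℕ) (M N : Matrix (Fin n) (Fin n) R⟦X⟧) :
    mcoeff k (M + N) = mcoeff k M + mcoeff k N := by
  ext i j; simp [mcoeff]

lemma mcoeff_sub (k : ℕ) (M N : Matrix (Fin n) (Fin n) R⟦X⟧) :
    mcoeff k (M - N) = mcoeff k M - mcoeff k N := by
  ext i j; simp [mcoeff]

lemma mcoeff_mul (k : ℕ) (M N : Matrix (Fin n) (Fin n) R⟦X⟧) :
    mcoeff k (M * N) = ∑ x ∈ antidiagonal k, mcoeff x.1 M * mcoeff x.2 N := by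
  ext i j
  simp only [mcoeff, Matrix.map_apply, Matrix.mul_apply, map_sum, coeff_mul, Matrix.sum_apply]
  exact Finset.sum_comm

lemma mcoeff_map_C (k : ℕ) (M₀ : Matrix (Fin n) (Fin n) R) :
    mcoeff k (M₀.map C) = if k = 0 then M₀ else 0 := by
  ext i j
  by_cases hk : k = 0 <;> simp [mcoeff, coeff_C, hk]

lemma mcoeff_map_monomial (k m : ℕ) (M₀ : Matrix (Fin n) (Fin n) R) :
    mcoeff k (M₀.map (monomial m)) = if k = m then M₀ else 0 := by
  ext i j
  by_cases hk : k = m <;> simp [mcoeff, coeff_monomial, hk]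

lemma mcoeff_one (k : ℕ) : mcoeff k (1 : Matrix (Fin n) (Fin n) R⟦X⟧) = if k = 0 then 1 else 0 := by
  rw [← Matrix.map_one C (map_zero C) (map_one C), mcoeff_map_C]

lemma mcoeff_map_C_mul (k : ℕ) (M₀ : Matrix (Fin n) (Fin n) R) (M : Matrix (Fin n) (Fin n) R⟦X⟧) :
    mcoeff k (M₀.map C * M) = M₀ * mcoeff k M := by
  ext i j
  simp [mcoeff, Matrix.mul_apply, coeff_C_mul]

lemma mcoeff_mul_map_C (k : ℕ) (M : Matrix (Fin n) (Fin n) R⟦X⟧) (M₀ : Matrix (Fin n) (Fin n) R) :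
    mcoeff k (M * M₀.map C) = mcoeff k M * M₀ := by
  ext i j
  simp [mcoeff, Matrix.mul_apply, coeff_mul_C]

lemma mcoeff_map_seriesD (k : ℕ) (D : R → R) (M : Matrix (Fin n) (Fin n) R⟦X⟧) :
    mcoeff k (M.map (seriesD D)) = (mcoeff k M).map D := by
  ext i j
  simp [mcoeff, seriesD]

lemma mcoeff_mul_eq_zero {k : ℕ} {M N : Matrix (Fin n) (Fin n) R⟦X⟧}
    (hM : ∀ i < k, mcoeff i M = 0) (hN : mcoeff 0 N = 0) : mcoeff k (M * N) = 0 := by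
  rw [mcoeff_mul]
  refine Finset.sum_eq_zero fun x hx => ?_
  rcases Nat.eq_zero_or_pos x.2 with h | h
  · rw [h, hN, mul_zero]
  · rw [hM x.1 (by have := mem_antidiagonal.mp hx; omega), zero_mul]

lemma isUnit_of_mcoeff_zero_eq_one {S : Matrix (Fin n) (Fin n) R⟦X⟧} (h : mcoeff 0 S = 1) :
    IsUnit S := by
  rw [Matrix.isUnit_iff_isUnit_det, isUnit_iff_constantCoeff, RingHom.map_det]
  have hconst : constantCoeff.mapMatrix S = mcoeff 0 S := by
    ext i j; simp [mcoeff, coeff_zero_eq_constantCoeff]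
  rw [hconst, h, Matrix.det_one]
  exact isUnit_one

lemma exists_mcoeff_eq_of_stable (P : ℕ → Matrix (Fin n) (Fin n) R⟦X⟧)
    (hP : ∀ m, ∀ j ≤ m, mcoeff j (P (m + 1)) = mcoeff j (P m)) :
    ∃ S, ∀ m, ∀ j ≤ m, mcoeff j S = mcoeff j (P m) := by
  refine ⟨Matrix.of fun i i' => PowerSeries.mk fun k => mcoeff k (P k) i i', fun m j hj => ?_⟩
  have hS : mcoeff j (Matrix.of fun i i' => PowerSeries.mk fun k => mcoeff k (P k) i i') =
      mcoeff j (P j) := by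
    ext i i'; simp [mcoeff]
  rw [hS]
  induction m, hj using Nat.le_induction with
  | base => rfl
  | succ m hjm ih => rw [ih, hP m j hjm]

end Coefficients

section TwistedCoefficients

variable {R : Type*} [CommRing R] {n : ℕ} {D : R → R}

lemma mcoeff_twistedDeriv_map_C (k : ℕ) (α₀ A₀ : Matrix (Fin n) (Fin n) R)
    (P : Matrix (Fin n) (Fin n) R⟦X⟧) :
    mcoeff k (twistedDeriv (seriesD D) (α₀.map C) (A₀.map C) P)
      = twistedDeriv D α₀ A₀ (mcoeff k P) := by
  simp only [twistedDeriv, mcoeff_sub, mcoeff_map_seriesD, mcoeff_map_C_mul, mcoeff_mul_map_C]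

lemma mcoeff_twistedDeriv (k : ℕ) (α₀ A₀ : Matrix (Fin n) (Fin n) R)
    (A P : Matrix (Fin n) (Fin n) R⟦X⟧) :
    mcoeff k (twistedDeriv (seriesD D) (α₀.map C) A P)
      = twistedDeriv D α₀ A₀ (mcoeff k P) + mcoeff k (P * (A - A₀.map C)) := by
  rw [twistedDeriv_eq_add_mul _ A (A₀.map C), mcoeff_add, mcoeff_twistedDeriv_map_C]

lemma mcoeff_zero_sub_map_C {A : Matrix (Fin n) (Fin n) R⟦X⟧} {A₀ : Matrix (Fin n) (Fin n) R}
    (hA : mcoeff 0 A = A₀) : mcoeff 0 (A - A₀.map C) = 0 := by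
  rw [mcoeff_sub, mcoeff_map_C, if_pos rfl, hA, sub_self]

variable {k : ℕ} {α₀ A₀ : Matrix (Fin n) (Fin n) R} {A : Matrix (Fin n) (Fin n) R⟦X⟧}

lemma mcoeff_twistedDeriv_eq_zero (hD : IsDeriv D) (hA : mcoeff 0 A = A₀)
    {P : Matrix (Fin n) (Fin n) R⟦X⟧} (hP : ∀ i ≤ k, mcoeff i P = 0) :
    mcoeff k (twistedDeriv (seriesD D) (α₀.map C) A P) = 0 := by
  rw [mcoeff_twistedDeriv k α₀ A₀, hP k le_rfl, twistedDeriv_zero hD, zero_add]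
  exact mcoeff_mul_eq_zero (fun i hi => hP i hi.le) (mcoeff_zero_sub_map_C hA)

lemma mcoeff_twistedDeriv_congr (hD : IsDeriv D) (hA : mcoeff 0 A = A₀)
    {P Q : Matrix (Fin n) (Fin n) R⟦X⟧} (h : ∀ i ≤ k, mcoeff i P = mcoeff i Q) :
    mcoeff k (twistedDeriv (seriesD D) (α₀.map C) A P)
      = mcoeff k (twistedDeriv (seriesD D) (α₀.map C) A Q) := by
  rw [← sub_eq_zero, ← mcoeff_sub, ← twistedDeriv_sub (isDeriv_seriesD hD)]
  exact mcoeff_twistedDeriv_eq_zero hD hA fun i hi => by rw [mcoeff_sub, h i hi, sub_self]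

lemma mcoeff_twistedDeriv_map_monomial (hA : mcoeff 0 A = A₀) (m : ℕ)
    (s : Matrix (Fin n) (Fin n) R) :
    mcoeff m (twistedDeriv (seriesD D) (α₀.map C) A (s.map (monomial m)))
      = twistedDeriv D α₀ A₀ s := by
  rw [mcoeff_twistedDeriv m α₀ A₀, mcoeff_map_monomial, if_pos rfl,
    mcoeff_mul_eq_zero (fun i hi => ?_) (mcoeff_zero_sub_map_C hA), add_zero]
  rw [mcoeff_map_monomial, if_neg hi.ne]

lemma mcoeff_twistedDeriv_map_monomial_of_lt (hD : IsDeriv D) (hA : mcoeff 0 A = A₀) {m : ℕ}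
    (hk : k < m) (s : Matrix (Fin n) (Fin n) R) :
    mcoeff k (twistedDeriv (seriesD D) (α₀.map C) A (s.map (monomial m))) = 0 :=
  mcoeff_twistedDeriv_eq_zero hD hA fun i hi => by
    rw [mcoeff_map_monomial, if_neg (by omega)]

end TwistedCoefficients

section Approximation

variable {R : Type*} [CommRing R] {n : ℕ} {Dx Dy : R → R}

def H1Vanishes (Dx Dy : R → R) (A₀ B₀ : Matrix (Fin n) (Fin n) R) : Prop :=
  ∀ U V, twistedDeriv Dy B₀ B₀ U = twistedDeriv Dx A₀ A₀ V →
    ∃ S, U = twistedDeriv Dx A₀ A₀ S ∧ V = twistedDeriv Dy B₀ B₀ S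

lemma IsZeroCurvature.map_C (hDx : IsDeriv Dx) (hDy : IsDeriv Dy)
    {A₀ B₀ : Matrix (Fin n) (Fin n) R} (h : IsZeroCurvature Dx Dy A₀ B₀) :
    IsZeroCurvature (seriesD Dx) (seriesD Dy) (A₀.map C) (B₀.map C) := by
  have hmap : ∀ {D : R → R}, IsDeriv D → ∀ M : Matrix (Fin n) (Fin n) R,
      (M.map C).map (seriesD D) = (M.map D).map C := fun hD M => by
    ext i j; simp [seriesD_C hD]
  have := congrArg (C (R := R)).mapMatrix h
  simp only [map_add, map_sub, map_mul, map_zero, RingHom.mapMatrix_apply] at this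
  rwa [IsZeroCurvature, hmap hDx, hmap hDy]

def IsGaugeModPow (Dx Dy : R → R) (A₀ B₀ : Matrix (Fin n) (Fin n) R)
    (A B : Matrix (Fin n) (Fin n) R⟦X⟧) (m : ℕ) (P : Matrix (Fin n) (Fin n) R⟦X⟧) : Prop :=
  ∀ j < m, mcoeff j (twistedDeriv (seriesD Dx) (A₀.map C) A P) = 0 ∧
    mcoeff j (twistedDeriv (seriesD Dy) (B₀.map C) B P) = 0

variable {A₀ B₀ : Matrix (Fin n) (Fin n) R} {A B : Matrix (Fin n) (Fin n) R⟦X⟧}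

lemma isGaugeModPow_one (hDx : IsDeriv Dx) (hDy : IsDeriv Dy) (hA : mcoeff 0 A = A₀)
    (hB : mcoeff 0 B = B₀) : IsGaugeModPow Dx Dy A₀ B₀ A B 1 1 := by
  intro j hj
  obtain rfl : j = 0 := by omega
  rw [twistedDeriv_one (isDeriv_seriesD hDx), twistedDeriv_one (isDeriv_seriesD hDy)]
  exact ⟨mcoeff_zero_sub_map_C hA, mcoeff_zero_sub_map_C hB⟩

lemma IsGaugeModPow.isCocycle (hDx : IsDeriv Dx) (hDy : IsDeriv Dy)
    (hcomm : ∀ a, Dx (Dy a) = Dy (Dx a)) (h₀ : IsZeroCurvature Dx Dy A₀ B₀)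
    (hAB : IsZeroCurvature (seriesD Dx) (seriesD Dy) A B) (hA : mcoeff 0 A = A₀)
    (hB : mcoeff 0 B = B₀) {m : ℕ} {P : Matrix (Fin n) (Fin n) R⟦X⟧}
    (hP : IsGaugeModPow Dx Dy A₀ B₀ A B m P) :
    twistedDeriv Dy B₀ B₀ (mcoeff m (twistedDeriv (seriesD Dx) (A₀.map C) A P))
      = twistedDeriv Dx A₀ A₀ (mcoeff m (twistedDeriv (seriesD Dy) (B₀.map C) B P)) := by
  -- `A - A₀` and `B - B₀` have no constant term, so the right side vanishes at order `m`
  have key := congrArg (mcoeff m) <| twistedDeriv_twistedDeriv_sub (isDeriv_seriesD hDx)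
    (isDeriv_seriesD hDy) (seriesD_seriesD_comm hcomm) (h₀.map_C hDx hDy) hAB P
  rwa [mcoeff_sub, mcoeff_sub, mcoeff_twistedDeriv_map_C, mcoeff_twistedDeriv_map_C,
    mcoeff_mul_eq_zero (fun j hj => (hP j hj).2) (mcoeff_zero_sub_map_C hA),
    mcoeff_mul_eq_zero (fun j hj => (hP j hj).1) (mcoeff_zero_sub_map_C hB),
    sub_self, sub_eq_zero] at key

lemma IsGaugeModPow.exists_succ (hDx : IsDeriv Dx) (hDy : IsDeriv Dy)
    (hcomm : ∀ a, Dx (Dy a) = Dy (Dx a)) (h₀ : IsZeroCurvature Dx Dy A₀ B₀)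
    (hH1 : H1Vanishes Dx Dy A₀ B₀) (hAB : IsZeroCurvature (seriesD Dx) (seriesD Dy) A B)
    (hA : mcoeff 0 A = A₀) (hB : mcoeff 0 B = B₀) {m : ℕ} {P : Matrix (Fin n) (Fin n) R⟦X⟧}
    (hP : IsGaugeModPow Dx Dy A₀ B₀ A B m P) :
    ∃ s : Matrix (Fin n) (Fin n) R,
      IsGaugeModPow Dx Dy A₀ B₀ A B (m + 1) (P - s.map (monomial m)) := by
  obtain ⟨s, hsx, hsy⟩ := hH1 _ _ (hP.isCocycle hDx hDy hcomm h₀ hAB hA hB)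
  refine ⟨s, fun j hj => ?_⟩
  rw [twistedDeriv_sub (isDeriv_seriesD hDx), twistedDeriv_sub (isDeriv_seriesD hDy), mcoeff_sub,
    mcoeff_sub]
  rcases Nat.lt_succ_iff_lt_or_eq.mp hj with hj | rfl
  · rw [(hP j hj).1, (hP j hj).2, mcoeff_twistedDeriv_map_monomial_of_lt hDx hA hj,
      mcoeff_twistedDeriv_map_monomial_of_lt hDy hB hj, sub_zero]
    exact ⟨rfl, rfl⟩
  · rw [mcoeff_twistedDeriv_map_monomial hA, mcoeff_twistedDeriv_map_monomial hB, ← hsx, ← hsy]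
    exact ⟨sub_self _, sub_self _⟩

lemma exists_seq_isGaugeModPow (hDx : IsDeriv Dx) (hDy : IsDeriv Dy)
    (hcomm : ∀ a, Dx (Dy a) = Dy (Dx a)) (h₀ : IsZeroCurvature Dx Dy A₀ B₀)
    (hH1 : H1Vanishes Dx Dy A₀ B₀) (hAB : IsZeroCurvature (seriesD Dx) (seriesD Dy) A B)
    (hA : mcoeff 0 A = A₀) (hB : mcoeff 0 B = B₀) :
    ∃ P : ℕ → Matrix (Fin n) (Fin n) R⟦X⟧, P 0 = 1 ∧
      (∀ m, IsGaugeModPow Dx Dy A₀ B₀ A B (m + 1) (P m)) ∧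
      ∀ m, ∀ j ≤ m, mcoeff j (P (m + 1)) = mcoeff j (P m) := by
  -- the hypothesis sits inside the `∃` so that `choose` yields a total correction map
  have step : ∀ m P, ∃ s : Matrix (Fin n) (Fin n) R, IsGaugeModPow Dx Dy A₀ B₀ A B m P →
      IsGaugeModPow Dx Dy A₀ B₀ A B (m + 1) (P - s.map (monomial m)) := fun m P => by
    by_cases hP : IsGaugeModPow Dx Dy A₀ B₀ A B m P
    · obtain ⟨s, hs⟩ := hP.exists_succ hDx hDy hcomm h₀ hH1 hAB hA hB
      exact ⟨s, fun _ => hs⟩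
    · exact ⟨0, fun h => absurd h hP⟩
  choose corr hcorr using step
  let P : ℕ → Matrix (Fin n) (Fin n) R⟦X⟧ :=
    fun m => Nat.rec 1 (fun m Q => Q - (corr (m + 1) Q).map (monomial (m + 1))) m
  refine ⟨P, rfl, fun m => ?_, fun m j hj => ?_⟩
  · induction m with
    | zero => exact isGaugeModPow_one hDx hDy hA hB
    | succ m ih => exact hcorr _ _ ih
  · change mcoeff j (P m - _) = _
    rw [mcoeff_sub, mcoeff_map_monomial, if_neg (by omega), sub_zero]

theorem exists_gauge_to_constant (hDx : IsDeriv Dx) (hDy : IsDeriv Dy)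
    (hcomm : ∀ a, Dx (Dy a) = Dy (Dx a)) (h₀ : IsZeroCurvature Dx Dy A₀ B₀)
    (hH1 : H1Vanishes Dx Dy A₀ B₀) (hAB : IsZeroCurvature (seriesD Dx) (seriesD Dy) A B)
    (hA : mcoeff 0 A = A₀) (hB : mcoeff 0 B = B₀) :
    ∃ S, mcoeff 0 S = 1 ∧ twistedDeriv (seriesD Dx) (A₀.map C) A S = 0 ∧
      twistedDeriv (seriesD Dy) (B₀.map C) B S = 0 := by
  obtain ⟨P, hP0, hPgauge, hPstable⟩ :=
    exists_seq_isGaugeModPow hDx hDy hcomm h₀ hH1 hAB hA hB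
  obtain ⟨S, hS⟩ := exists_mcoeff_eq_of_stable P hPstable
  refine ⟨S, by rw [hS 0 0 le_rfl, hP0, mcoeff_one, if_pos rfl], ext_mcoeff fun k => ?_,
    ext_mcoeff fun k => ?_⟩
  · rw [mcoeff_twistedDeriv_congr hDx hA (hS k), (hPgauge k k k.lt_succ_self).1, mcoeff_zero]
  · rw [mcoeff_twistedDeriv_congr hDy hB (hS k), (hPgauge k k k.lt_succ_self).2, mcoeff_zero]

end Approximation

/-- Formal removability under vanishing first horizontal gauge cohomology:
if every cocycle with respect to the zero-curvature representation `(A₀, B₀)` is a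
coboundary, then every formal one-parameter zero-curvature representation over `R[[λ]]`
with constant terms `A₀, B₀` can be gauged to the constant family `(A₀, B₀)` by an
invertible matrix over `R[[λ]]` whose constant term is the identity. -/
theorem formally_removable_of_H1_zero {R : Type*} [CommRing R] {n : ℕ}
    (Dx Dy : R → R) (hDx : IsDeriv Dx) (hDy : IsDeriv Dy)
    (hcomm : ∀ a, Dx (Dy a) = Dy (Dx a))
    (A₀ B₀ : Matrix (Fin n) (Fin n) R)
    (hzcr : A₀.map Dy - B₀.map Dx + (A₀ * B₀ - B₀ * A₀) = 0)
    (hH1 : ∀ U V : Matrix (Fin n) (Fin n) R,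
      U.map Dy - (B₀ * U - U * B₀) = V.map Dx - (A₀ * V - V * A₀) →
      ∃ S : Matrix (Fin n) (Fin n) R,
        U = S.map Dx - (A₀ * S - S * A₀) ∧ V = S.map Dy - (B₀ * S - S * B₀)) :
    ∀ A B : Matrix (Fin n) (Fin n) (PowerSeries R),
      A.map (seriesD Dy) - B.map (seriesD Dx) + (A * B - B * A) = 0 →
      mcoeff 0 A = A₀ → mcoeff 0 B = B₀ →
      ∃ S T : Matrix (Fin n) (Fin n) (PowerSeries R),
        mcoeff 0 S = 1 ∧ S * T = 1 ∧ T * S = 1 ∧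
        S.map (seriesD Dx) * T + S * A * T = A₀.map (PowerSeries.C (R := R)) ∧
        S.map (seriesD Dy) * T + S * B * T = B₀.map (PowerSeries.C (R := R)) := by
  intro A B hAB hA hB
  obtain ⟨S, hS0, hSx, hSy⟩ := exists_gauge_to_constant hDx hDy hcomm hzcr hH1 hAB hA hB
  obtain ⟨u, rfl⟩ := isUnit_of_mcoeff_zero_eq_one hS0
  exact ⟨u, ↑u⁻¹, hS0, u.mul_inv, u.inv_mul, map_add_mul_eq_of_twistedDeriv_eq_zero hSx u.mul_inv,
    map_add_mul_eq_of_twistedDeriv_eq_zero hSy u.mul_inv⟩
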